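/- With the normal form w_g of g ∈ K as defined (w_g = w_g^Δ · w_g^{(1)} ⋯ w_g^{(n−1)}), the word length of w_g satisfies |w_g| ≤ 3·|g|_X, where |g|_X is the word length of g with respect to the generating set X = {x_j^{(α)}}. -/

import Mathlib

section
variable (n r : ℕ)

/-- The direct product of `n` copies of the free group of rank `r`. -/
abbrev Gnr := Fin n → FreeGroup (Fin r)

/-- `ℤ^r`, written multiplicatively. -/
abbrev Zr (r : ℕ) := Multiplicative (Fin r → ℤ)

/-- The homomorphism `F_r → ℤ^r` sending the `j`-th generator to the `j`-th basis vector. -/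
def φr : FreeGroup (Fin r) →* Zr r :=
  FreeGroup.lift (fun j => Multiplicative.ofAdd (Pi.single j 1))

/-- The homomorphism `ψ : F_r^{(1)} × ⋯ × F_r^{(n)} → ℤ^r` with `ψ(a_j^{(α)}) = e_j`. -/
def ψnr : Gnr n r →* Zr r :=
  ∏ α : Fin n, (φr r).comp (Pi.evalMonoidHom (fun _ => FreeGroup (Fin r)) α)

variable {n} in
/-- The inclusion of the `α`-th factor into the direct product. -/
def ins (α : Fin n) : FreeGroup (Fin r) →* Gnr n r :=
  MonoidHom.mulSingle (fun _ => FreeGroup (Fin r)) α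

end

/-- The last index, corresponding to the `n`-th factor. -/
def lastIdx {n : ℕ} (hn : 0 < n) : Fin n := ⟨n - 1, by omega⟩

/-- The generators `x_j^{(α)} = a_j^{(α)} (a_j^{(n)})⁻¹` of the kernel. -/
def xg {n r : ℕ} (hn : 0 < n) (α : Fin n) (j : Fin r) : Gnr n r :=
  ins r α (FreeGroup.of j) * (ins r (lastIdx hn) (FreeGroup.of j))⁻¹

/-- The free group on the generating set `X = {x_j^{(α)} : α ≤ n−1, j ≤ r}` of `K`. -/
abbrev FX (n r : ℕ) := FreeGroup (Fin (n - 1) × Fin r)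

/-- Evaluation of words in the letters `X` in the ambient direct product. -/
def evX (n r : ℕ) (hn : 2 ≤ n) : FX n r →* Gnr n r :=
  FreeGroup.lift (fun p => xg (by omega) ⟨p.1.1, by omega⟩ p.2)

/-- The inclusion of words in the letters `x_1^{(i)},…,x_r^{(i)}` into `F(X)`. -/
def insL {n r : ℕ} (i : Fin (n - 1)) : FreeGroup (Fin r) →* FX n r :=
  FreeGroup.lift (fun j => FreeGroup.of (i, j))

/-- The inclusion of words in the diagonal letters `Δ = (x_1^{(1)},…,x_r^{(r)})`
into `F(X)`. -/
def insD (n r : ℕ) (hrn : r + 2 ≤ n) : FreeGroup (Fin r) →* FX n r :=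
  FreeGroup.lift (fun j => FreeGroup.of (⟨j.1, by omega⟩, j))

/-!
Both `w_g` and `u` evaluate to `g`, and every coordinate of `g` can be read off a word in `X`:
the `α`-th coordinate (`α < n`) is the word keeping only the letters of block `α`, and the
`n`-th is, up to inverting the generators, the word with its block indices forgotten. Projecting
to block `α` sends the diagonal letters into a cyclic group, so it kills `w_g^Δ ∈ [F_r, F_r]`:
thus `w_g^{(α)}` is the `α`-th projection of `u`, and `∑ |w_g^{(α)}| ≤ |u|`. The last coordinate
gives `w_g^Δ · w_g^{(1)} ⋯ w_g^{(n−1)} = u` with indices forgotten, hence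
`|w_g^Δ| ≤ |u| + ∑ |w_g^{(α)}| ≤ 2|u|` and `|w_g| ≤ 3|u|`.
-/

namespace List

theorem prod_ofFn_eq_single {M : Type*} [Monoid M] :
    ∀ {m : ℕ} {f : Fin m → M} (α : Fin m), (∀ i ≠ α, f i = 1) → (ofFn f).prod = f α
  | 0, _, α, _ => α.elim0
  | m + 1, f, α, hf => by
    rw [ofFn_succ, prod_cons]
    cases α using Fin.cases with
    | zero =>
      have hrest : ∀ i : Fin m, f i.succ = 1 := fun i => hf i.succ (Fin.succ_ne_zero i)
      rw [prod_eq_one (by simpa [forall_mem_ofFn_iff] using hrest), mul_one]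
    | succ β =>
      rw [hf 0 (Fin.succ_ne_zero β).symm, one_mul,
        prod_ofFn_eq_single β fun i hi => hf i.succ (Fin.succ_injective _ |>.ne hi)]

end List

namespace FreeGroup

variable {α β : Type*}

theorem lift_eq_one_of_mem_commutator {G : Type*} [Group G] {f : α → G}
    (hf : ∀ a b, Commute (f a) (f b)) {x : FreeGroup α} (hx : x ∈ commutator (FreeGroup α)) :
    lift f x = 1 := by
  have hcomm : ∀ y z : FreeGroup α, Commute (lift f y) (lift f z) := by
    have hrange := Subgroup.closure_le_centralizer_centralizer (Set.range f)
    rw [← range_lift_eq_closure] at hrange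
    intro y z
    exact Set.centralizer_centralizer_comm_of_comm
      (by rintro _ ⟨a, rfl⟩ _ ⟨b, rfl⟩; exact hf a b) _ (hrange ⟨y, rfl⟩) _ (hrange ⟨z, rfl⟩)
  have hker : commutator (FreeGroup α) ≤ (lift f).ker := by
    rw [commutator_def, Subgroup.commutator_le]
    intro y _ z _
    rw [MonoidHom.mem_ker, map_commutatorElement, commutatorElement_eq_one_iff_commute]
    exact hcomm y z
  exact hker hx

section
variable [DecidableEq β]

theorem sum_norm_lift_mk_le {ι : Type*} [Fintype ι] (f : ι → α → FreeGroup β)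
    (hf : ∀ a, ∑ i, (f i a).norm ≤ 1) (L : List (α × Bool)) :
    ∑ i, (lift (f i) (mk L)).norm ≤ L.length := by
  induction L with
  | nil => simp [← one_eq_mk]
  | cons p L ih =>
    have hletter : ∑ i, (lift (f i) (mk [p])).norm ≤ 1 := by
      obtain ⟨a, _ | _⟩ := p
      · simpa [show mk [(a, false)] = (of a)⁻¹ from rfl, FreeGroup.norm_inv_eq, norm_of] using hf a
      · simpa [show mk [(a, true)] = of a from rfl] using hf a
    calc ∑ i, (lift (f i) (mk (p :: L))).norm
        ≤ ∑ i, ((lift (f i) (mk [p])).norm + (lift (f i) (mk L)).norm) := by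
          refine Finset.sum_le_sum fun i _ => ?_
          rw [← List.singleton_append, ← mul_mk, MonoidHom.map_mul]
          exact norm_mul_le _ _
      _ ≤ 1 + L.length := by rw [Finset.sum_add_distrib]; exact Nat.add_le_add hletter ih
      _ = (p :: L).length := by simp [Nat.add_comm]

variable [DecidableEq α]

theorem sum_norm_lift_le {ι : Type*} [Fintype ι] (f : ι → α → FreeGroup β)
    (hf : ∀ a, ∑ i, (f i a).norm ≤ 1) (x : FreeGroup α) :
    ∑ i, (lift (f i) x).norm ≤ x.norm := by
  have h := sum_norm_lift_mk_le f hf x.toWord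
  rwa [mk_toWord] at h

theorem norm_lift_le (f : α → FreeGroup β) (hf : ∀ a, (f a).norm ≤ 1) (x : FreeGroup α) :
    (lift f x).norm ≤ x.norm := by
  simpa using sum_norm_lift_le (ι := Unit) (fun _ => f) (by simpa using hf) x

end

variable [DecidableEq α]

theorem norm_list_prod_le (L : List (FreeGroup α)) : L.prod.norm ≤ (L.map norm).sum := by
  induction L with
  | nil => simp [norm_one]
  | cons x L ih => simpa using (norm_mul_le x L.prod).trans (Nat.add_le_add_left ih _)

theorem norm_prod_ofFn_le {m : ℕ} (f : Fin m → FreeGroup α) :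
    (List.ofFn f).prod.norm ≤ ∑ i, (f i).norm := by
  simpa [List.map_ofFn, List.sum_ofFn] using norm_list_prod_le (List.ofFn f)

end FreeGroup

open FreeGroup (lift of)

variable {n r : ℕ}

def projL (α : Fin (n - 1)) : FX n r →* FreeGroup (Fin r) :=
  lift fun p => if p.1 = α then of p.2 else 1

def forgetBlock : FX n r →* FreeGroup (Fin r) :=
  lift fun p => of p.2

def invGens (r : ℕ) : FreeGroup (Fin r) →* FreeGroup (Fin r) :=
  lift fun j => (of j)⁻¹

def normalFormWord (hrn : r + 2 ≤ n) (d : FreeGroup (Fin r))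
    (ws : Fin (n - 1) → FreeGroup (Fin r)) : FX n r :=
  insD n r hrn d * (List.ofFn fun i => insL i (ws i)).prod

theorem evX_apply_of_lt (hn : 2 ≤ n) (α : Fin (n - 1)) (v : FX n r) :
    evX n r hn v ⟨α, by omega⟩ = projL α v := by
  suffices (Pi.evalMonoidHom _ _).comp (evX n r hn) = projL α from DFunLike.congr_fun this v
  refine FreeGroup.ext_hom _ _ fun ⟨i, j⟩ => ?_
  have hα : (α : ℕ) ≠ n - 1 := α.isLt.ne
  simp [evX, xg, ins, lastIdx, projL, Pi.mulSingle_apply, Fin.ext_iff, eq_comm, hα]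

theorem invGens_evX_apply_last (hn : 2 ≤ n) (v : FX n r) :
    invGens r (evX n r hn v ⟨n - 1, by omega⟩) = forgetBlock v := by
  suffices (invGens r).comp ((Pi.evalMonoidHom _ ⟨n - 1, by omega⟩).comp (evX n r hn)) =
      forgetBlock from DFunLike.congr_fun this v
  refine FreeGroup.ext_hom _ _ fun ⟨i, j⟩ => ?_
  have hi : n - 1 ≠ (i : ℕ) := i.isLt.ne'
  simp [evX, xg, ins, lastIdx, forgetBlock, invGens, Fin.ext_iff, hi]

theorem projL_insL (α i : Fin (n - 1)) (x : FreeGroup (Fin r)) :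
    projL α (insL i x) = if i = α then x else 1 := by
  induction x using FreeGroup.induction_on with
  | C1 => simp
  | of j => simp [projL, insL]
  | inv_of j h => split_ifs at * <;> simp_all
  | mul x y hx hy => split_ifs at * <;> simp_all

theorem projL_insD_of_mem_commutator (hrn : r + 2 ≤ n) (α : Fin (n - 1))
    {d : FreeGroup (Fin r)} (hd : d ∈ commutator (FreeGroup (Fin r))) :
    projL α (insD n r hrn d) = 1 := by
  have hcomp : (projL α).comp (insD n r hrn) =
      lift fun j : Fin r => if (⟨j, by omega⟩ : Fin (n - 1)) = α then of j else 1 :=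
    FreeGroup.ext_hom _ _ fun j => by simp [projL, insD]
  rw [← MonoidHom.comp_apply, hcomp]
  -- only the diagonal letter `x_α^{(α)}` survives, so the image is cyclic
  refine FreeGroup.lift_eq_one_of_mem_commutator (fun a b => ?_) hd
  by_cases ha : (⟨a, by omega⟩ : Fin (n - 1)) = α
  · by_cases hb : (⟨b, by omega⟩ : Fin (n - 1)) = α
    · rw [show a = b by simpa [Fin.ext_iff] using ha.trans hb.symm]
      exact Commute.refl _
    · simp [hb]
  · simp [ha]

theorem forgetBlock_insD (hrn : r + 2 ≤ n) (d : FreeGroup (Fin r)) :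
    forgetBlock (insD n r hrn d) = d :=
  DFunLike.congr_fun (FreeGroup.ext_hom (forgetBlock.comp (insD n r hrn)) (MonoidHom.id _)
    fun j => by simp [forgetBlock, insD]) d

theorem forgetBlock_insL (i : Fin (n - 1)) (x : FreeGroup (Fin r)) :
    forgetBlock (insL i x) = x :=
  DFunLike.congr_fun (FreeGroup.ext_hom (forgetBlock.comp (insL i)) (MonoidHom.id _)
    fun j => by simp [forgetBlock, insL]) x

theorem projL_normalFormWord (hrn : r + 2 ≤ n) {d : FreeGroup (Fin r)}
    (hd : d ∈ commutator (FreeGroup (Fin r))) (ws : Fin (n - 1) → FreeGroup (Fin r))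
    (α : Fin (n - 1)) : projL α (normalFormWord hrn d ws) = ws α := by
  rw [normalFormWord, _root_.map_mul, projL_insD_of_mem_commutator hrn α hd, one_mul,
    map_list_prod, List.map_ofFn, List.prod_ofFn_eq_single α fun i hi => by simp [projL_insL, hi]]
  simp [projL_insL]

theorem forgetBlock_normalFormWord (hrn : r + 2 ≤ n) (d : FreeGroup (Fin r))
    (ws : Fin (n - 1) → FreeGroup (Fin r)) :
    forgetBlock (normalFormWord hrn d ws) = d * (List.ofFn ws).prod := by
  simp [normalFormWord, map_list_prod, List.map_ofFn, Function.comp_def, forgetBlock_insD,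
    forgetBlock_insL]

theorem sum_norm_projL_le (v : FX n r) : ∑ α, (projL α v).norm ≤ v.norm :=
  FreeGroup.sum_norm_lift_le _
    (fun p => by simp [apply_ite FreeGroup.norm, FreeGroup.norm_of, FreeGroup.norm_one]) v

theorem norm_forgetBlock_le (v : FX n r) : (forgetBlock v).norm ≤ v.norm :=
  FreeGroup.norm_lift_le _ (fun _ => (FreeGroup.norm_of _).le) v

theorem norm_normalFormWord_le (hrn : r + 2 ≤ n) (d : FreeGroup (Fin r))
    (ws : Fin (n - 1) → FreeGroup (Fin r)) :
    (normalFormWord hrn d ws).norm ≤ d.norm + ∑ i, (ws i).norm := by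
  refine (FreeGroup.norm_mul_le _ _).trans (Nat.add_le_add ?_ ?_)
  · exact FreeGroup.norm_lift_le _ (fun _ => (FreeGroup.norm_of _).le) d
  · exact (FreeGroup.norm_prod_ofFn_le _).trans
      (Finset.sum_le_sum fun i _ =>
        FreeGroup.norm_lift_le _ (fun _ => (FreeGroup.norm_of _).le) (ws i))

/-- The length bound on the normal form: if `w_g = w_g^Δ · w_g^{(1)} ⋯ w_g^{(n−1)}` is a
normal form of `g ∈ K` (diagonal part in the commutator subgroup), then its word length is
at most `3·|g|_X`, i.e. at most three times the length of any word `u` in the generators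
`X` representing `g`. -/
theorem normal_form_length_bound (n r : ℕ) (hrn : r + 2 ≤ n)
    (g : Gnr n r)
    (d : FreeGroup (Fin r)) (ws : Fin (n - 1) → FreeGroup (Fin r))
    (hd : d ∈ commutator (FreeGroup (Fin r)))
    (hrep : evX n r (by omega)
      (insD n r hrn d * (List.ofFn (fun i : Fin (n - 1) => insL i (ws i))).prod) = g)
    (u : FX n r) (hu : evX n r (by omega) u = g) :
    ((insD n r hrn d *
        (List.ofFn (fun i : Fin (n - 1) => insL i (ws i))).prod).toWord).length ≤
      3 * u.toWord.length := by
  change (normalFormWord hrn d ws).norm ≤ 3 * u.norm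
  have hw : evX n r (by omega) (normalFormWord hrn d ws) = evX n r (by omega) u :=
    hrep.trans hu.symm
  have hws : ∀ α, ws α = projL α u := fun α => by
    simpa [evX_apply_of_lt, projL_normalFormWord hrn hd] using congrFun hw ⟨α, by omega⟩
  have hdws : d * (List.ofFn ws).prod = forgetBlock u := by
    simpa [invGens_evX_apply_last, forgetBlock_normalFormWord] using
      congrArg (invGens r) (congrFun hw ⟨n - 1, by omega⟩)
  have hws_norm : ∑ α, (ws α).norm ≤ u.norm := by simpa only [hws] using sum_norm_projL_le u
  have hd_norm : d.norm ≤ 2 * u.norm := calc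
    d.norm = (forgetBlock u * (List.ofFn ws).prod⁻¹).norm := by rw [← hdws, mul_inv_cancel_right]
    _ ≤ (forgetBlock u).norm + (List.ofFn ws).prod.norm := by
      simpa only [FreeGroup.norm_inv_eq] using
        FreeGroup.norm_mul_le (forgetBlock u) (List.ofFn ws).prod⁻¹
    _ ≤ u.norm + ∑ α, (ws α).norm :=
      Nat.add_le_add (norm_forgetBlock_le u) (FreeGroup.norm_prod_ofFn_le ws)
    _ ≤ 2 * u.norm := by omega
  calc (normalFormWord hrn d ws).norm ≤ d.norm + ∑ α, (ws α).norm :=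
      norm_normalFormWord_le hrn d ws
    _ ≤ 3 * u.norm := by omega
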